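/- arXiv:1601.00870 — 3 statements merged into one kernel-verified Lean document; each statement's English description precedes it below -/
import Mathlib

section
/- Let G be a cubic graph admitting a connected join J whose congruent proper 3-edge-colouring exists. Then G admits a 2-packing of four joins, at least one of which is connected. -/
/-- The number of edges of `S` incident with `v`. -/
noncomputable def edgeDeg {V : Type*} (S : Set (Sym2 V)) (v : V) : ℕ :=
  {e ∈ S | v ∈ e}.ncard

/-- A join of a cubic graph `G`: a set of edges in which every vertex has degree 1 or 3. -/
def IsJoinOf {V : Type*} (G : SimpleGraph V) (J : Set (Sym2 V)) : Prop :=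
  J ⊆ G.edgeSet ∧ ∀ v : V, edgeDeg J v = 1 ∨ edgeDeg J v = 3

/-- `c` is a proper 3-edge-colouring of the edge set `J`. -/
def IsProperOn {V : Type*} (J : Set (Sym2 V)) (c : Sym2 V → Fin 3) : Prop :=
  ∀ e₁ ∈ J, ∀ e₂ ∈ J, e₁ ≠ e₂ → (∃ v : V, v ∈ e₁ ∧ v ∈ e₂) → c e₁ ≠ c e₂

/-- A pendant edge of `J`: an edge of `J` incident with a vertex of degree 1 in `J`. -/
def IsPendant {V : Type*} (J : Set (Sym2 V)) (e : Sym2 V) : Prop :=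
  e ∈ J ∧ ∃ v ∈ e, edgeDeg J v = 1

/-- `T` is an edge-cut of `G`: an inclusionwise minimal set of edges whose removal
increases the number of connected components. -/
def IsEdgeCut {V : Type*} [Fintype V] (G : SimpleGraph V) (T : Set (Sym2 V)) : Prop :=
  T ⊆ G.edgeSet ∧
  Nat.card G.ConnectedComponent < Nat.card (G.deleteEdges T).ConnectedComponent ∧
  ∀ T' : Set (Sym2 V), T' ⊂ T →
    ¬ (Nat.card G.ConnectedComponent < Nat.card (G.deleteEdges T').ConnectedComponent)

/-- A proper 3-edge-colouring `c` of a join `J` of `G` is congruent: for every set `S`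
of pendant edges of `J` forming an edge-cut of `G` and every colour `i`,
`|S| ≡ |S ∩ c⁻¹(i)| (mod 2)`. -/
def IsCongruent {V : Type*} [Fintype V] (G : SimpleGraph V) (J : Set (Sym2 V))
    (c : Sym2 V → Fin 3) : Prop :=
  ∀ S : Set (Sym2 V), (∀ e ∈ S, IsPendant J e) → IsEdgeCut G S →
    ∀ i : Fin 3, S.ncard % 2 = {e ∈ S | c e = i}.ncard % 2



set_option linter.unusedSectionVars false
set_option linter.unusedVariables false
set_option maxHeartbeats 1000000

section Basics
variable {V : Type*} [Finite V] [DecidableEq V]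

variable {V : Type*} [Finite V] [DecidableEq V]

lemma edgeDeg_mono {A B : Set (Sym2 V)} (h : A ⊆ B) (v : V) : edgeDeg A v ≤ edgeDeg B v :=
  Set.ncard_le_ncard (fun e he => ⟨h he.1, he.2⟩) (Set.toFinite _)

lemma edgeDeg_union {A B : Set (Sym2 V)} (h : Disjoint A B) (v : V) :
    edgeDeg (A ∪ B) v = edgeDeg A v + edgeDeg B v := by
  unfold edgeDeg
  rw [show {e ∈ A ∪ B | v ∈ e} = {e ∈ A | v ∈ e} ∪ {e ∈ B | v ∈ e} by
    ext e
    constructor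
    · rintro ⟨h | h, hv⟩
      · exact Or.inl ⟨h, hv⟩
      · exact Or.inr ⟨h, hv⟩
    · rintro (⟨h, hv⟩ | ⟨h, hv⟩)
      · exact ⟨Or.inl h, hv⟩
      · exact ⟨Or.inr h, hv⟩]
  exact Set.ncard_union_eq (h.mono (fun e he => he.1) (fun e he => he.1))
    (Set.toFinite _) (Set.toFinite _)

lemma edgeDeg_empty (v : V) : edgeDeg (∅ : Set (Sym2 V)) v = 0 := by
  simp [edgeDeg]

lemma edgeDeg_singleton (e : Sym2 V) (v : V) :
    edgeDeg {e} v = if v ∈ e then 1 else 0 := by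
  unfold edgeDeg
  by_cases hv : v ∈ e
  · rw [if_pos hv, show {x ∈ ({e} : Set (Sym2 V)) | v ∈ x} = {e} by
      ext x
      constructor
      · rintro ⟨hx, -⟩; exact hx
      · rintro rfl; exact ⟨rfl, hv⟩]
    exact Set.ncard_singleton e
  · rw [if_neg hv, show {x ∈ ({e} : Set (Sym2 V)) | v ∈ x} = ∅ by
      ext x
      simp only [Set.mem_empty_iff_false, iff_false]
      rintro ⟨rfl, h⟩
      exact hv h]
    simp

lemma edgeDeg_symmDiff (A B : Set (Sym2 V)) (v : V) :
    edgeDeg (symmDiff A B) v % 2 = (edgeDeg A v + edgeDeg B v) % 2 := by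
  have hA : edgeDeg A v = edgeDeg (A \ B) v + edgeDeg (A ∩ B) v := by
    rw [← edgeDeg_union Set.disjoint_sdiff_inter, Set.diff_union_inter]
  have hB : edgeDeg B v = edgeDeg (B \ A) v + edgeDeg (B ∩ A) v := by
    rw [← edgeDeg_union Set.disjoint_sdiff_inter, Set.diff_union_inter]
  have hS : edgeDeg (symmDiff A B) v = edgeDeg (A \ B) v + edgeDeg (B \ A) v := by
    rw [Set.symmDiff_def, edgeDeg_union disjoint_sdiff_sdiff]
  have hI : edgeDeg (A ∩ B) v = edgeDeg (B ∩ A) v := by rw [Set.inter_comm]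
  omega

lemma edgeDeg_subset_zero {A : Set (Sym2 V)} {v : V} (h : edgeDeg A v = 0) {e : Sym2 V}
    (he : e ∈ A) : v ∉ e := by
  intro hv
  have h2 : {x ∈ A | v ∈ x} = ∅ := (Set.ncard_eq_zero (Set.toFinite _)).mp h
  rw [Set.eq_empty_iff_forall_notMem] at h2
  exact h2 e ⟨he, hv⟩

lemma edgeDeg_pos {A : Set (Sym2 V)} {v : V} {e : Sym2 V} (he : e ∈ A) (hv : v ∈ e) :
    1 ≤ edgeDeg A v := by
  have h1 : e ∈ {x ∈ A | v ∈ x} := ⟨he, hv⟩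
  have := Set.ncard_le_ncard (Set.singleton_subset_iff.mpr h1) (Set.toFinite _)
  simpa [edgeDeg] using this

end Basics

section Graph

open SimpleGraph

variable {V : Type*} [Finite V] [DecidableEq V]

/-- The set of edges used an odd number of times by a walk (computed as iterated
symmetric difference). -/
noncomputable def walkSet {H : SimpleGraph V} : ∀ {u v : V}, H.Walk u v → Set (Sym2 V)
  | _, _, .nil => ∅
  | _, _, .cons (u := u) (v := b) _ p => symmDiff {s(u, b)} (walkSet p)

lemma walkSet_subset {H : SimpleGraph V} {u v : V} (p : H.Walk u v) :
    walkSet p ⊆ H.edgeSet := by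
  induction p with
  | nil => simp [walkSet]
  | @cons a b w h p ih =>
    have h1 : symmDiff {s(a, b)} (walkSet p) ⊆ {s(a, b)} ∪ walkSet p := by
      rw [Set.symmDiff_def]
      exact Set.union_subset_union Set.diff_subset Set.diff_subset
    refine subset_trans h1 (Set.union_subset ?_ ih)
    simpa using h

lemma edgeDeg_walkSet {H : SimpleGraph V} {u v : V} (p : H.Walk u v) (x : V) :
    edgeDeg (walkSet p) x % 2 = ((if x = u then 1 else 0) + (if x = v then 1 else 0)) % 2 := by
  induction p with
  | nil =>
    show edgeDeg (∅ : Set (Sym2 V)) x % 2 = _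
    rw [edgeDeg_empty]
    split <;> simp
  | @cons a b w h p ih =>
    show edgeDeg (symmDiff {s(a, b)} (walkSet p)) x % 2 = _
    have hab : a ≠ b := h.ne
    have hs : edgeDeg {s(a, b)} x = if x = a ∨ x = b then 1 else 0 := by
      rw [edgeDeg_singleton]
      exact if_congr Sym2.mem_iff rfl rfl
    rw [edgeDeg_symmDiff, Nat.add_mod, ih, hs]
    by_cases hxa : x = a <;> by_cases hxb : x = b
    · exact absurd (hxa.symm.trans hxb) hab
    · rw [if_pos (Or.inl hxa), if_pos hxa, if_neg hxb]
      by_cases hxw : x = w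
      · rw [if_pos hxw]
      · rw [if_neg hxw]
    · rw [if_pos (Or.inr hxb), if_neg hxa, if_pos hxb]
      by_cases hxw : x = w
      · rw [if_pos hxw]
      · rw [if_neg hxw]
    · rw [if_neg (fun h' => h'.elim hxa hxb), if_neg hxa, if_neg hxb]
      by_cases hxw : x = w
      · rw [if_pos hxw]
      · rw [if_neg hxw]

lemma mem_of_reachable_closed {H : SimpleGraph V} {A : Set V}
    (hA : ∀ x y, x ∈ A → H.Adj x y → y ∈ A) {u v : V} (hu : u ∈ A)
    (h : H.Reachable u v) : v ∈ A := by
  obtain ⟨p⟩ := h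
  induction p with
  | nil => exact hu
  | cons hadj p ih => exact ih (hA _ _ hu hadj)

lemma reachable_transfer {G G' : SimpleGraph V}
    (h : ∀ a b, G.Adj a b → G'.Reachable a b) {u v : V}
    (hr : G.Reachable u v) : G'.Reachable u v := by
  obtain ⟨p⟩ := hr
  induction p with
  | nil => exact Reachable.refl _
  | cons hadj p ih => exact (h _ _ hadj).trans ih

lemma card_cc_of_connected {G : SimpleGraph V} (h : G.Connected) :
    Nat.card G.ConnectedComponent = 1 := by
  rw [Nat.card_eq_one_iff_unique]
  constructor
  · constructor
    intro a b
    refine ConnectedComponent.ind₂ (fun x y => ?_) a b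
    exact ConnectedComponent.sound (h.preconnected x y)
  · exact ⟨G.connectedComponentMk h.nonempty.some⟩
  
lemma even_ncard_of_fibers {α β : Type*} [Finite α] (A : Set α) (f : α → β)
    (h : ∀ a ∈ A, Even {x ∈ A | f x = f a}.ncard) : Even A.ncard := by
  generalize hn : A.ncard = n
  induction n using Nat.strong_induction_on generalizing A with
  | _ n ih =>
    rcases A.eq_empty_or_nonempty with rfl | ⟨a, ha⟩
    · rw [← hn, Set.ncard_empty]
      exact Even.zero
    · set F := {x ∈ A | f x = f a} with hF
      have hFA : F ⊆ A := fun x hx => hx.1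
      have hcard : (F ∪ A \ F).ncard = F.ncard + (A \ F).ncard :=
        Set.ncard_union_eq Set.disjoint_sdiff_right (Set.toFinite _) (Set.toFinite _)
      rw [Set.union_diff_cancel hFA] at hcard
      have hFpos : 0 < F.ncard := (Set.ncard_pos (Set.toFinite _)).mpr ⟨a, ha, rfl⟩
      have hrest : Even (A \ F).ncard := by
        refine ih (A \ F).ncard (by omega) (A \ F) ?_ rfl
        intro b hb
        obtain ⟨hbA, hbnF⟩ := hb
        have hfb : f b ≠ f a := fun hfb => hbnF ⟨hbA, hfb⟩
        have heq : {x ∈ A \ F | f x = f b} = {x ∈ A | f x = f b} := by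
          ext x
          constructor
          · rintro ⟨⟨hx, -⟩, hfx⟩
            exact ⟨hx, hfx⟩
          · rintro ⟨hx, hfx⟩
            exact ⟨⟨hx, fun hxF => hfb (hfx ▸ hxF.2)⟩, hfx⟩
        rw [heq]
        exact h b hbA
      have hFeven : Even F.ncard := h a ha
      rw [← hn, hcard]
      exact hFeven.add hrest

/-- T-join existence in a graph all of whose "components" meet `T` evenly. -/
lemma exists_tjoin (H : SimpleGraph V) (T : Set V)
    (hT : ∀ w, Even {x ∈ T | H.Reachable w x}.ncard) :
    ∃ P, P ⊆ H.edgeSet ∧ (∀ v ∈ T, edgeDeg P v % 2 = 1) ∧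
      (∀ v, v ∉ T → edgeDeg P v % 2 = 0) := by
  generalize hn : T.ncard = n
  induction n using Nat.strong_induction_on generalizing T with
  | _ n ih =>
    rcases T.eq_empty_or_nonempty with rfl | ⟨u, hu⟩
    · exact ⟨∅, by simp, by simp, fun v _ => by simp [edgeDeg_empty]⟩
    · have hCeven := hT u
      set C := {x ∈ T | H.Reachable u x} with hC
      have huC : u ∈ C := ⟨hu, Reachable.refl u⟩
      have hC2 : 1 < C.ncard := by
        have h1 : 0 < C.ncard := (Set.ncard_pos (Set.toFinite _)).mpr ⟨u, huC⟩
        rcases hCeven with ⟨k, hk⟩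
        omega
      obtain ⟨v, hvC, hvu⟩ := Set.exists_ne_of_one_lt_ncard hC2 u
      have huv : H.Reachable u v := hvC.2
      have hsub : {u, v} ⊆ T := by
        rintro x (rfl | rfl)
        · exact hu
        · exact hvC.1
      set T' := T \ {u, v} with hT'
      have hT'card : T'.ncard = n - 2 := by
        rw [hT', Set.ncard_diff hsub (Set.toFinite _), Set.ncard_pair (Ne.symm hvu), hn]
      have hn2 : 2 ≤ n := by
        have := Set.ncard_le_ncard (show C ⊆ T from fun x hx => hx.1) (Set.toFinite _)
        omega
      have hT'even : ∀ w, Even {x ∈ T' | H.Reachable w x}.ncard := by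
        intro w
        by_cases hw : H.Reachable w u
        · have : {x ∈ T' | H.Reachable w x} = {x ∈ T | H.Reachable w x} \ {u, v} := by
            ext x
            constructor
            · rintro ⟨⟨hx, hx2⟩, hr⟩; exact ⟨⟨hx, hr⟩, hx2⟩
            · rintro ⟨⟨hx, hr⟩, hx2⟩; exact ⟨⟨hx, hx2⟩, hr⟩
          rw [this, Set.ncard_diff (by
            rintro x (rfl | rfl)
            · exact ⟨hu, hw⟩
            · exact ⟨hvC.1, hw.trans huv⟩) (Set.toFinite _),
            Set.ncard_pair (Ne.symm hvu)]
          rcases hT w with ⟨k, hk⟩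
          have h2 : 2 ≤ {x ∈ T | H.Reachable w x}.ncard := by
            have : ({u, v} : Set V) ⊆ {x ∈ T | H.Reachable w x} := by
              rintro x (rfl | rfl)
              · exact ⟨hu, hw⟩
              · exact ⟨hvC.1, hw.trans huv⟩
            have := Set.ncard_le_ncard this (Set.toFinite _)
            rwa [Set.ncard_pair (Ne.symm hvu)] at this
          exact ⟨k - 1, by omega⟩
        · have : {x ∈ T' | H.Reachable w x} = {x ∈ T | H.Reachable w x} := by
            ext x
            constructor
            · rintro ⟨⟨hx, -⟩, hr⟩; exact ⟨hx, hr⟩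
            · rintro ⟨hx, hr⟩
              refine ⟨⟨hx, ?_⟩, hr⟩
              rintro (rfl | rfl)
              · exact hw hr
              · exact hw (hr.trans huv.symm)
          rw [this]; exact hT w
      obtain ⟨P', hP'sub, hP'1, hP'0⟩ := ih T'.ncard (by omega) T' hT'even rfl
      obtain ⟨p⟩ := huv
      refine ⟨symmDiff P' (walkSet p), ?_, ?_, ?_⟩
      · have h1 : symmDiff P' (walkSet p) ⊆ P' ∪ walkSet p := by
          rw [Set.symmDiff_def]
          exact Set.union_subset_union Set.diff_subset Set.diff_subset
        exact subset_trans h1 (Set.union_subset hP'sub (walkSet_subset p))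
      · intro x hx
        rw [edgeDeg_symmDiff, Nat.add_mod, edgeDeg_walkSet p x]
        by_cases hxu : x = u
        · subst hxu
          rw [hP'0 x (by simp [hT']), if_pos rfl, if_neg hvu.symm]
        · by_cases hxv : x = v
          · subst hxv
            rw [hP'0 x (by simp [hT']), if_neg hxu, if_pos rfl]
          · rw [hP'1 x ⟨hx, by simp [hxu, hxv]⟩, if_neg hxu, if_neg hxv]
      · intro x hx
        rw [edgeDeg_symmDiff, Nat.add_mod, edgeDeg_walkSet p x]
        have hxu : x ≠ u := fun h => hx (h ▸ hu)
        have hxv : x ≠ v := fun h => hx (h ▸ hvC.1)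
        rw [hP'0 x (fun h => hx h.1), if_neg hxu, if_neg hxv]

end Graph

section Parity
open SimpleGraph

variable {V : Type*} [Fintype V] [DecidableEq V]

lemma reachable_cases {H : SimpleGraph V} {u v : V} (h : H.Reachable u v) :
    v = u ∨ ∃ y, H.Adj y v := by
  obtain ⟨p⟩ := h
  induction p with
  | nil => exact Or.inl rfl
  | @cons a b d h q ih =>
    rcases ih with rfl | hy
    · exact Or.inr ⟨a, h⟩
    · exact Or.inr hy

lemma parity_lemma (G : SimpleGraph V) (hG : G.Connected)
    (J : Set (Sym2 V)) (hJE : J ⊆ G.edgeSet)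
    (hdeg : ∀ v : V, edgeDeg J v = 1 ∨ edgeDeg J v = 3)
    (hdeg3 : ∀ v : V, edgeDeg G.edgeSet v = 3)
    (c : Sym2 V → Fin 3) (hcong : IsCongruent G J c)
    (pend : V → Sym2 V)
    (hpend : ∀ v, edgeDeg J v = 1 → pend v ∈ J ∧ v ∈ pend v ∧ ∀ e ∈ J, v ∈ e → e = pend v)
    (i : Fin 3) (w : V) :
    Even {x ∈ {v | edgeDeg J v = 1 ∧ c (pend v) ≠ i} |
      (SimpleGraph.fromEdgeSet (G.edgeSet \ J)).Reachable w x}.ncard := by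
  classical
  set D := G.edgeSet \ J with hD
  set H := SimpleGraph.fromEdgeSet D with hHdef
  have hDJ : Disjoint J D := Set.disjoint_sdiff_right
  have hHadj : ∀ {x y : V}, H.Adj x y ↔ s(x, y) ∈ D ∧ x ≠ y := fun {x y} =>
    SimpleGraph.fromEdgeSet_adj D
  have hsum : ∀ v, edgeDeg J v + edgeDeg D v = 3 := by
    intro v
    rw [← edgeDeg_union hDJ v, hD, Set.union_diff_cancel hJE]
    exact hdeg3 v
  rcases hdeg w with hw1 | hw3
  case inr =>
    -- w has J-degree 3, so it is isolated in H and not pendant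
    have hDw : edgeDeg D w = 0 := by have := hsum w; omega
    have hclosed : ∀ x y, x ∈ ({w} : Set V) → H.Adj x y → y ∈ ({w} : Set V) := by
      intro x y hx hadj
      rcases hHadj.mp hadj with ⟨hmem, hne⟩
      rw [Set.mem_singleton_iff] at hx
      subst hx
      exact absurd (Sym2.mem_mk_left x y) (edgeDeg_subset_zero hDw hmem)
    have hempty : {x ∈ {v | edgeDeg J v = 1 ∧ c (pend v) ≠ i} | H.Reachable w x} = ∅ := by
      rw [Set.eq_empty_iff_forall_notMem]
      rintro x ⟨⟨hx1, -⟩, hr⟩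
      have hxw : x ∈ ({w} : Set V) := mem_of_reachable_closed hclosed rfl hr
      rw [Set.mem_singleton_iff] at hxw
      subst hxw
      omega
    rw [hempty, Set.ncard_empty]
    exact Even.zero
  case inl =>
  set W := {x | H.Reachable w x} with hW
  have hWw : w ∈ W := SimpleGraph.Reachable.refl w
  have hWclosed : ∀ x y, x ∈ W → H.Adj x y → y ∈ W := fun x y hx hadj =>
    (hx : H.Reachable w x).trans hadj.reachable
  have hWpend : ∀ x ∈ W, edgeDeg J x = 1 := by
    intro x hx
    rcases hdeg x with h1 | h3
    · exact h1
    · exfalso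
      have hDx : edgeDeg D x = 0 := by have := hsum x; omega
      rcases reachable_cases (hx : H.Reachable w x) with rfl | ⟨y, hy⟩
      · omega
      · rcases hHadj.mp hy with ⟨hmem, -⟩
        exact (edgeDeg_subset_zero hDx hmem) (Sym2.mem_mk_right y x)
  -- the pendant edges leaving W
  set S := {e | ∃ x z, e = s(x, z) ∧ x ∈ W ∧ z ∉ W ∧ e ∈ J} with hS
  have hSJ : S ⊆ J := by
    rintro e ⟨x, z, rfl, hx, hz, hJmem⟩
    exact hJmem
  have hSpend : ∀ e ∈ S, IsPendant J e := by
    rintro e ⟨x, z, rfl, hx, hz, hJmem⟩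
    exact ⟨hJmem, x, Sym2.mem_mk_left x z, hWpend x hx⟩
  -- the unique W-endpoint of an S-edge
  have hSW : ∀ {e : Sym2 V}, e ∈ S → ∀ {x y : V}, x ∈ e → x ∈ W → y ∈ e → y ∈ W → x = y := by
    rintro e ⟨a, z, rfl, ha, hz, hJmem⟩ x y hxe hx hye hy
    rcases Sym2.mem_iff.mp hxe with rfl | rfl
    · rcases Sym2.mem_iff.mp hye with rfl | rfl
      · rfl
      · exact absurd hy hz
    · exact absurd hx hz
  set G' := G.deleteEdges S with hG'
  have hWclosedG' : ∀ x y, x ∈ W → G'.Adj x y → y ∈ W := by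
    intro x y hx hadj
    rcases SimpleGraph.deleteEdges_adj.mp hadj with ⟨hGadj, hnotS⟩
    by_cases hJ' : s(x, y) ∈ J
    · by_contra hyW
      exact hnotS ⟨x, y, rfl, hx, hyW, hJ'⟩
    · have hmemD : s(x, y) ∈ D := ⟨(G.mem_edgeSet).mpr hGadj, hJ'⟩
      exact hWclosed x y hx (hHadj.mpr ⟨hmemD, hGadj.ne⟩)
  -- the target set and its two pieces
  set X := {x ∈ {v | edgeDeg J v = 1 ∧ c (pend v) ≠ i} | H.Reachable w x} with hX
  set Xs := {x ∈ X | pend x ∈ S} with hXs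
  have hXsX : Xs ⊆ X := fun x hx => hx.1
  set SA := {e ∈ S | c e ≠ i} with hSA
  -- pendant vertices of W: basic facts
  have hpendW : ∀ x ∈ W, pend x ∈ J ∧ x ∈ pend x ∧ ∀ e ∈ J, x ∈ e → e = pend x :=
    fun x hx => hpend x (hWpend x hx)
  -- Even (X \ Xs) : chords pair up
  have hXc : Even (X \ Xs).ncard := by
    apply even_ncard_of_fibers _ pend
    intro a ha
    obtain ⟨haX, hanS⟩ := ha
    obtain ⟨⟨ha1, hci⟩, haW⟩ := haX
    have hanS' : pend a ∉ S := fun hpS => hanS ⟨⟨⟨ha1, hci⟩, haW⟩, hpS⟩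
    obtain ⟨hpJ, hap, huniq⟩ := hpend a ha1
    set b := Sym2.Mem.other hap with hb
    have hspec : s(a, b) = pend a := Sym2.other_spec hap
    have hbW : b ∈ W := by
      by_contra hbW
      exact hanS' ⟨a, b, hspec.symm, haW, hbW, hpJ⟩
    have hab : a ≠ b := by
      have : G.Adj a b := (G.mem_edgeSet).mp (hJE (hspec ▸ hpJ))
      exact this.ne
    have hb1 : edgeDeg J b = 1 := hWpend b hbW
    have hpb : pend b = pend a := ((hpend b hb1).2.2 (pend a) hpJ (hspec ▸ Sym2.mem_mk_right a b)).symm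
    have hbX : b ∈ X \ Xs := by
      refine ⟨⟨⟨hb1, ?_⟩, hbW⟩, ?_⟩
      · rw [hpb]; exact hci
      · intro hbs
        exact hanS' (hpb ▸ hbs.2)
    have hfib : {x ∈ X \ Xs | pend x = pend a} = {a, b} := by
      ext x
      constructor
      · rintro ⟨⟨⟨⟨hx1, -⟩, -⟩, -⟩, hpx⟩
        have hxp : x ∈ pend x := (hpend x hx1).2.1
        rw [hpx, ← hspec] at hxp
        rcases Sym2.mem_iff.mp hxp with rfl | rfl
        · exact Or.inl rfl
        · exact Or.inr rfl
      · rintro (rfl | rfl)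
        · exact ⟨⟨⟨⟨ha1, hci⟩, haW⟩, hanS⟩, rfl⟩
        · exact ⟨hbX, hpb⟩
    rw [hfib, Set.ncard_pair hab]
    exact ⟨1, rfl⟩
  -- the cut around a component of the complement of W, and its congruence
  set zOf : Sym2 V → V := fun e => if h : ∃ z, z ∈ e ∧ z ∉ W then h.choose else w with hzOfdef
  have hzOf : ∀ e ∈ S, zOf e ∈ e ∧ zOf e ∉ W := by
    rintro e ⟨x, z, rfl, hx, hz, hJmem⟩
    have hex : ∃ z', z' ∈ s(x, z) ∧ z' ∉ W := ⟨z, Sym2.mem_mk_right x z, hz⟩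
    rw [hzOfdef]
    simp only [dif_pos hex]
    exact hex.choose_spec
  have hSAeven : Even SA.ncard := by
    apply even_ncard_of_fibers _ (fun e => G'.connectedComponentMk (zOf e))
    intro e₀ he₀
    obtain ⟨he₀S, he₀c⟩ := he₀
    show Even {e ∈ SA | G'.connectedComponentMk (zOf e) = G'.connectedComponentMk (zOf e₀)}.ncard
    obtain ⟨hz₀mem, hz₀W⟩ := hzOf e₀ he₀S
    set z₀ := zOf e₀ with hz₀
    set Y := {y | G'.Reachable z₀ y} with hY
    have hz₀Y : z₀ ∈ Y := SimpleGraph.Reachable.refl z₀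
    have hYW : ∀ y ∈ Y, y ∉ W := by
      intro y hy hyW
      exact hz₀W (mem_of_reachable_closed hWclosedG' hyW (hy : G'.Reachable z₀ y).symm)
    set cut := {e ∈ S | ∃ y, y ∈ e ∧ y ∈ Y} with hcut
    have hcutS : cut ⊆ S := fun e he => he.1
    -- the non-W endpoint of a cut edge lies in Y
    have hcutY : ∀ {e : Sym2 V}, e ∈ cut → zOf e ∈ Y := by
      rintro e ⟨heS, y, hye, hyY⟩
      obtain ⟨hzmem, hzW⟩ := hzOf e heS
      obtain ⟨x', z', heq, hx', hz', -⟩ := heS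
      have hyW' : y ∉ W := hYW y hyY
      have hye' : y ∈ s(x', z') := by rw [← heq]; exact hye
      have hzmem' : zOf e ∈ s(x', z') := by rw [← heq]; exact hzmem
      have hyz : y = z' := by
        rcases Sym2.mem_iff.mp hye' with h | h
        · exact absurd hx' (h ▸ hyW')
        · exact h
      have hzz : zOf e = z' := by
        rcases Sym2.mem_iff.mp hzmem' with h | h
        · exact absurd hx' (h ▸ hzW)
        · exact h
      rw [hzz, ← hyz]
      exact hyY
    -- the fiber is exactly the non-i-coloured part of the cut
    have hfib : {e ∈ SA | G'.connectedComponentMk (zOf e) = G'.connectedComponentMk z₀} =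
        {e ∈ cut | c e ≠ i} := by
      ext e
      constructor
      · rintro ⟨⟨heS, hec⟩, hcc⟩
        have hreach : G'.Reachable (zOf e) z₀ := SimpleGraph.ConnectedComponent.eq.mp hcc
        exact ⟨⟨heS, zOf e, (hzOf e heS).1, hreach.symm⟩, hec⟩
      · rintro ⟨hecut, hec⟩
        refine ⟨⟨hecut.1, hec⟩, ?_⟩
        exact SimpleGraph.ConnectedComponent.sound (hcutY hecut : G'.Reachable z₀ (zOf e)).symm
    -- cut is an edge-cut consisting of pendant edges
    have hcut_pend : ∀ e ∈ cut, IsPendant J e := fun e he => hSpend e (hcutS he)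
    have hcutE : cut ⊆ G.edgeSet := fun e he => hJE (hSJ (hcutS he))
    have hYclosedCut : ∀ a b, a ∈ Y → (G.deleteEdges cut).Adj a b → b ∈ Y := by
      intro a b ha hadj
      rcases SimpleGraph.deleteEdges_adj.mp hadj with ⟨hGadj, hnotcut⟩
      by_cases hab : s(a, b) ∈ S
      · exact absurd ⟨hab, a, Sym2.mem_mk_left a b, ha⟩ hnotcut
      · have : G'.Adj a b := SimpleGraph.deleteEdges_adj.mpr ⟨hGadj, hab⟩
        exact (ha : G'.Reachable z₀ a).trans this.reachable
    have hG1 : Nat.card G.ConnectedComponent = 1 := card_cc_of_connected hG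
    have hedgecut : IsEdgeCut G cut := by
      refine ⟨hcutE, ?_, ?_⟩
      · rw [hG1]
        rw [Finite.one_lt_card_iff_nontrivial]
        refine ⟨(G.deleteEdges cut).connectedComponentMk z₀,
          (G.deleteEdges cut).connectedComponentMk w, fun hcc => ?_⟩
        have hreach := SimpleGraph.ConnectedComponent.eq.mp hcc
        exact hYW w (mem_of_reachable_closed hYclosedCut hz₀Y hreach) hWw
      · intro T' hT'
        obtain ⟨e₁, he₁cut, he₁T'⟩ := Set.exists_of_ssubset hT'
        have hT'cut : T' ⊆ cut := hT'.subset
        obtain ⟨x₁, z₁, he₁eq, hx₁, hz₁, hJ₁⟩ := he₁cut.1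
        have hz₁Y : z₁ ∈ Y := by
          obtain ⟨y, hye, hyY⟩ := he₁cut.2
          have hyz : y = z₁ := by
            rcases Sym2.mem_iff.mp (he₁eq ▸ hye) with h | h
            · exact absurd hx₁ (h ▸ (hYW _ hyY))
            · exact h
          exact hyz ▸ hyY
        have hconn' : (G.deleteEdges T').Connected := by
          haveI : Nonempty V := hG.nonempty
          refine ⟨fun a b => ?_⟩
          refine reachable_transfer ?_ (hG.preconnected a b)
          intro a' b' hadj
          by_cases hab : s(a', b') ∈ T'
          · -- the deleted edge goes between W and Y; reroute via e₁
            obtain ⟨x₂, z₂, he₂eq, hx₂, hz₂, hJ₂⟩ := hcutS (hT'cut hab)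
            have hz₂Y : z₂ ∈ Y := by
              obtain ⟨y, hye, hyY⟩ := (hT'cut hab).2
              have hyz : y = z₂ := by
                rcases Sym2.mem_iff.mp (he₂eq ▸ hye) with h | h
                · exact absurd hx₂ (h ▸ (hYW _ hyY))
                · exact h
              exact hyz ▸ hyY
            have hHle : ∀ p q : V, H.Adj p q → (G.deleteEdges T').Reachable p q := by
              intro p q hpq
              rcases hHadj.mp hpq with ⟨hmemD, hne⟩
              refine SimpleGraph.Adj.reachable (SimpleGraph.deleteEdges_adj.mpr ⟨?_, ?_⟩)
              · exact (G.mem_edgeSet).mp hmemD.1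
              · intro hmem
                exact hmemD.2 (hSJ (hcutS (hT'cut hmem)))
            have hG'le : ∀ p q : V, G'.Adj p q → (G.deleteEdges T').Reachable p q := by
              intro p q hpq
              rcases SimpleGraph.deleteEdges_adj.mp hpq with ⟨hGadj, hnS⟩
              exact SimpleGraph.Adj.reachable (SimpleGraph.deleteEdges_adj.mpr
                ⟨hGadj, fun hmem => hnS (hcutS (hT'cut hmem))⟩)
            have step1 : (G.deleteEdges T').Reachable x₂ x₁ :=
              reachable_transfer hHle ((hx₂ : H.Reachable w x₂).symm.trans hx₁)
            have step2 : (G.deleteEdges T').Reachable x₁ z₁ := by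
              refine SimpleGraph.Adj.reachable (SimpleGraph.deleteEdges_adj.mpr ⟨?_, ?_⟩)
              · exact (G.mem_edgeSet).mp (hJE (he₁eq ▸ hJ₁))
              · intro hmem
                exact he₁T' (he₁eq ▸ hmem)
            have step3 : (G.deleteEdges T').Reachable z₁ z₂ :=
              reachable_transfer hG'le ((hz₁Y : G'.Reachable z₀ z₁).symm.trans hz₂Y)
            have key : (G.deleteEdges T').Reachable x₂ z₂ := (step1.trans step2).trans step3
            rcases Sym2.eq_iff.mp he₂eq with ⟨rfl, rfl⟩ | ⟨rfl, rfl⟩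
            · exact key
            · exact key.symm
          · exact SimpleGraph.Adj.reachable (SimpleGraph.deleteEdges_adj.mpr ⟨hadj, hab⟩)
        rw [hG1, card_cc_of_connected hconn']
        omega
    -- apply congruence to the cut
    have hcongcut := hcong cut hcut_pend hedgecut i
    have hsubcut : {e ∈ cut | c e = i} ⊆ cut := fun e he => he.1
    have hdiffeq : {e ∈ cut | c e ≠ i} = cut \ {e ∈ cut | c e = i} := by
      ext e
      constructor
      · rintro ⟨hec, hne⟩
        exact ⟨hec, fun hmem => hne hmem.2⟩
      · rintro ⟨hec, hnmem⟩
        exact ⟨hec, fun heq => hnmem ⟨hec, heq⟩⟩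
    have hle : {e ∈ cut | c e = i}.ncard ≤ cut.ncard := Set.ncard_le_ncard hsubcut (Set.toFinite _)
    rw [hfib, hdiffeq, Set.ncard_diff hsubcut (Set.toFinite _), Nat.even_sub hle]
    rw [Nat.even_iff, Nat.even_iff, hcongcut]
  -- assemble
  have hXseven : Even Xs.ncard := by
    have hinj : Set.InjOn pend Xs := by
      intro x hx y hy hpxy
      have hxW : x ∈ W := hx.1.2
      have hyW : y ∈ W := hy.1.2
      have hxe : x ∈ pend x := (hpendW x hxW).2.1
      have hye : y ∈ pend x := hpxy ▸ (hpendW y hyW).2.1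
      exact hSW hx.2 hxe hxW hye hyW
    have himg : pend '' Xs = SA := by
      ext e
      constructor
      · rintro ⟨x, hx, rfl⟩
        exact ⟨hx.2, hx.1.1.2⟩
      · rintro ⟨heS, hec⟩
        obtain ⟨x, z, heq, hx, hz, hJm⟩ := id heS
        have hx1 : edgeDeg J x = 1 := hWpend x hx
        have hmemx : x ∈ e := heq ▸ Sym2.mem_mk_left x z
        have hpx' : e = pend x := (hpend x hx1).2.2 e hJm hmemx
        refine ⟨x, ⟨⟨⟨hx1, ?_⟩, hx⟩, ?_⟩, hpx'.symm⟩
        · rw [← hpx']; exact hec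
        · rw [← hpx']; exact heS
    have : Xs.ncard = (pend '' Xs).ncard := (Set.ncard_image_of_injOn hinj).symm
    rw [this, himg]
    exact hSAeven
  have hXcard : X.ncard = Xs.ncard + (X \ Xs).ncard := by
    have h2 := Set.ncard_union_eq (Set.disjoint_sdiff_right : Disjoint Xs (X \ Xs))
      (Set.toFinite Xs) (Set.toFinite (X \ Xs))
    rw [Set.union_diff_cancel hXsX] at h2
    exact h2
  rw [hXcard]
  exact hXseven.add hXc

end Parity

/-- If a cubic graph `G` admits a connected join `J` having a congruent
proper 3-edge-colouring, then `G` admits a 2-packing of four joins, at least one of which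
is connected. -/
theorem congruent_colouring_gives_packing {V : Type*} [Fintype V] [DecidableEq V]
    (G : SimpleGraph V) [DecidableRel G.Adj]
    (hcubic : ∀ v : V, G.degree v = 3)
    (J : Set (Sym2 V)) (hJ : IsJoinOf G J)
    (hconn : (SimpleGraph.fromEdgeSet J).Connected)
    (c : Sym2 V → Fin 3) (hproper : IsProperOn J c) (hcong : IsCongruent G J c) :
    ∃ K : Fin 4 → Set (Sym2 V),
      (∀ i, IsJoinOf G (K i)) ∧
      (∀ e : Sym2 V, Nat.card {i : Fin 4 // e ∈ K i} ≤ 2) ∧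
      ∃ i, (SimpleGraph.fromEdgeSet (K i)).Connected := by
  classical
  haveI hne : Nonempty V := hconn.nonempty
  obtain ⟨hJE, hJdeg⟩ := hJ
  have hGconn : G.Connected := by
    refine hconn.mono ?_
    intro a b hab
    rw [SimpleGraph.fromEdgeSet_adj] at hab
    exact (G.mem_edgeSet).mp (hJE hab.1)
  have hdeg3 : ∀ v : V, edgeDeg G.edgeSet v = 3 := by
    intro v
    have h1 : edgeDeg G.edgeSet v = (G.incidenceSet v).ncard := rfl
    rw [h1, Set.ncard_eq_toFinset_card', Set.toFinset_card, G.card_incidenceSet_eq_degree v]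
    exact hcubic v
  -- the pendant-edge selector
  have hexist : ∀ v : V, ∃ e : Sym2 V, edgeDeg J v = 1 →
      (e ∈ J ∧ v ∈ e ∧ ∀ e' ∈ J, v ∈ e' → e' = e) := by
    intro v
    by_cases h : edgeDeg J v = 1
    · obtain ⟨e₀, he₀⟩ := Set.ncard_eq_one.mp h
      have h1 : e₀ ∈ {e ∈ J | v ∈ e} := by rw [he₀]; rfl
      refine ⟨e₀, fun _ => ⟨h1.1, h1.2, fun e' hJ' hv' => ?_⟩⟩
      have h2 : e' ∈ {e ∈ J | v ∈ e} := ⟨hJ', hv'⟩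
      rw [he₀] at h2
      exact h2
    · exact ⟨s(Classical.arbitrary V, Classical.arbitrary V), fun h1 => absurd h1 h⟩
  choose pend hpend using hexist
  set D := G.edgeSet \ J with hD
  set H := SimpleGraph.fromEdgeSet D with hH
  have hDJ : Disjoint J D := Set.disjoint_sdiff_right
  have hsum : ∀ v, edgeDeg J v + edgeDeg D v = 3 := by
    intro v
    rw [← edgeDeg_union hDJ v, hD, Set.union_diff_cancel hJE]
    exact hdeg3 v
  set M : Fin 3 → Set (Sym2 V) := fun i => {e ∈ J | c e = i} with hM
  have hMJ : ∀ i, M i ⊆ J := fun i e he => he.1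
  -- colour degrees at a degree-3 vertex
  have hM3 : ∀ v, edgeDeg J v = 3 → ∀ i, edgeDeg (M i) v = 1 := by
    intro v hv i
    have hA3 : {e ∈ J | v ∈ e}.ncard = 3 := hv
    have hinj : Set.InjOn c {e ∈ J | v ∈ e} := by
      intro e₁ he₁ e₂ he₂ hcc
      by_contra hne
      exact hproper e₁ he₁.1 e₂ he₂.1 hne ⟨v, he₁.2, he₂.2⟩ hcc
    have himg : (c '' {e ∈ J | v ∈ e}).ncard = 3 := by
      rw [Set.ncard_image_of_injOn hinj]; exact hA3
    have huniv : c '' {e ∈ J | v ∈ e} = Set.univ := by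
      apply Set.eq_of_subset_of_ncard_le (Set.subset_univ _)
      rw [Set.ncard_univ, himg, Nat.card_eq_fintype_card, Fintype.card_fin]
    have hi : i ∈ c '' {e ∈ J | v ∈ e} := huniv ▸ Set.mem_univ i
    obtain ⟨e, heA, hce⟩ := hi
    have hset : {x ∈ M i | v ∈ x} = {e} := by
      apply Set.eq_singleton_iff_unique_mem.mpr
      constructor
      · exact ⟨⟨heA.1, hce⟩, heA.2⟩
      · rintro x ⟨⟨hxJ, hxc⟩, hxv⟩
        exact hinj ⟨hxJ, hxv⟩ heA (by rw [hxc, hce])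
    show {x ∈ M i | v ∈ x}.ncard = 1
    rw [hset]
    exact Set.ncard_singleton e
  -- colour degrees at a pendant vertex
  have hM1 : ∀ v, edgeDeg J v = 1 → ∀ i, edgeDeg (M i) v = if c (pend v) = i then 1 else 0 := by
    intro v hv i
    obtain ⟨hpJ, hpv, huniq⟩ := hpend v hv
    by_cases hc : c (pend v) = i
    · rw [if_pos hc]
      have hset : {x ∈ M i | v ∈ x} = {pend v} := by
        apply Set.eq_singleton_iff_unique_mem.mpr
        exact ⟨⟨⟨hpJ, hc⟩, hpv⟩, fun x hx => huniq x hx.1.1 hx.2⟩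
      show {x ∈ M i | v ∈ x}.ncard = 1
      rw [hset]
      exact Set.ncard_singleton _
    · rw [if_neg hc]
      have hset : {x ∈ M i | v ∈ x} = ∅ := by
        rw [Set.eq_empty_iff_forall_notMem]
        rintro x ⟨⟨hxJ, hxc⟩, hxv⟩
        exact hc (huniq x hxJ hxv ▸ hxc)
      show {x ∈ M i | v ∈ x}.ncard = 0
      rw [hset]
      exact Set.ncard_empty _
  -- the three parity-correcting subgraphs of D
  have hTeven := fun (i : Fin 3) => parity_lemma G hGconn J hJE hJdeg hdeg3 c hcong pend hpend i
  obtain ⟨P₀, hP₀sub, hP₀1, hP₀0⟩ :=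
    exists_tjoin H {v | edgeDeg J v = 1 ∧ c (pend v) ≠ 0} (hTeven 0)
  obtain ⟨P₁, hP₁sub, hP₁1, hP₁0⟩ :=
    exists_tjoin H {v | edgeDeg J v = 1 ∧ c (pend v) ≠ 1} (hTeven 1)
  have h012 : ∀ j : Fin 3, j = 0 ∨ j = 1 ∨ j = 2 := by decide
  have hP₂sub : symmDiff P₀ P₁ ⊆ H.edgeSet := by
    have h1 : symmDiff P₀ P₁ ⊆ P₀ ∪ P₁ := by
      rw [Set.symmDiff_def]
      exact Set.union_subset_union Set.diff_subset Set.diff_subset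
    exact subset_trans h1 (Set.union_subset hP₀sub hP₁sub)
  have hP₂par : ∀ v, edgeDeg (symmDiff P₀ P₁) v % 2 = (edgeDeg P₀ v % 2 + edgeDeg P₁ v % 2) % 2 := by
    intro v
    rw [edgeDeg_symmDiff, Nat.add_mod]
  have hP₂1 : ∀ v ∈ {v | edgeDeg J v = 1 ∧ c (pend v) ≠ 2}, edgeDeg (symmDiff P₀ P₁) v % 2 = 1 := by
    rintro v ⟨hv1, hvc⟩
    rw [hP₂par]
    rcases h012 (c (pend v)) with h | h | h
    · rw [hP₀0 v (fun hmem => hmem.2 h), hP₁1 v ⟨hv1, by rw [h]; decide⟩]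
    · rw [hP₀1 v ⟨hv1, by rw [h]; decide⟩, hP₁0 v (fun hmem => hmem.2 h)]
    · exact absurd h hvc
  have hP₂0 : ∀ v, v ∉ {v | edgeDeg J v = 1 ∧ c (pend v) ≠ 2} →
      edgeDeg (symmDiff P₀ P₁) v % 2 = 0 := by
    intro v hv
    rw [hP₂par]
    by_cases hv1 : edgeDeg J v = 1
    · have hc2 : c (pend v) = 2 := by
        by_contra hc
        exact hv ⟨hv1, hc⟩
      rw [hP₀1 v ⟨hv1, by rw [hc2]; decide⟩, hP₁1 v ⟨hv1, by rw [hc2]; decide⟩]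
    · rw [hP₀0 v (fun hmem => hv1 hmem.1), hP₁0 v (fun hmem => hv1 hmem.1)]
  -- each M j ∪ P is a join
  have hHE : H.edgeSet ⊆ D := by
    rw [hH, SimpleGraph.edgeSet_fromEdgeSet]
    exact Set.diff_subset
  have hjoin : ∀ (j : Fin 3) (P : Set (Sym2 V)), P ⊆ H.edgeSet →
      (∀ v ∈ {v | edgeDeg J v = 1 ∧ c (pend v) ≠ j}, edgeDeg P v % 2 = 1) →
      (∀ v, v ∉ {v | edgeDeg J v = 1 ∧ c (pend v) ≠ j} → edgeDeg P v % 2 = 0) →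
      IsJoinOf G (M j ∪ P) := by
    intro j P hPsub hp1 hp0
    have hPD : P ⊆ D := subset_trans hPsub hHE
    constructor
    · rintro e (he | he)
      · exact hJE (hMJ j he)
      · exact (hPD he).1
    · intro v
      have hunion : edgeDeg (M j ∪ P) v = edgeDeg (M j) v + edgeDeg P v :=
        edgeDeg_union (hDJ.mono (hMJ j) hPD) v
      have hPle : edgeDeg P v ≤ edgeDeg D v := edgeDeg_mono hPD v
      rcases hJdeg v with h1 | h3
      · have hD2 : edgeDeg D v = 2 := by have := hsum v; omega
        rw [hunion, hM1 v h1 j]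
        by_cases hc : c (pend v) = j
        · rw [if_pos hc]
          have := hp0 v (fun hmem => hmem.2 hc)
          omega
        · rw [if_neg hc]
          have := hp1 v ⟨h1, hc⟩
          omega
      · have hD0 : edgeDeg D v = 0 := by have := hsum v; omega
        rw [hunion, hM3 v h3 j]
        omega
  -- assemble the four joins
  set K : Fin 4 → Set (Sym2 V) := fun i =>
    if i = 0 then J else if i = 1 then M 0 ∪ P₀ else if i = 2 then M 1 ∪ P₁
      else M 2 ∪ symmDiff P₀ P₁ with hK
  have hK0 : K 0 = J := rfl
  have hK1 : K 1 = M 0 ∪ P₀ := rfl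
  have hK2 : K 2 = M 1 ∪ P₁ := rfl
  have hK3 : K 3 = M 2 ∪ symmDiff P₀ P₁ := rfl
  have h0123 : ∀ i : Fin 4, i = 0 ∨ i = 1 ∨ i = 2 ∨ i = 3 := by decide
  refine ⟨K, ?_, ?_, ⟨0, ?_⟩⟩
  · intro i
    rcases h0123 i with rfl | rfl | rfl | rfl
    · exact ⟨hJE, hJdeg⟩
    · exact hjoin 0 P₀ hP₀sub hP₀1 hP₀0
    · exact hjoin 1 P₁ hP₁sub hP₁1 hP₁0
    · exact hjoin 2 _ hP₂sub hP₂1 hP₂0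
  · intro e
    have hcard : Nat.card {i : Fin 4 // e ∈ K i} = {i : Fin 4 | e ∈ K i}.ncard :=
      Nat.card_coe_set_eq {i : Fin 4 | e ∈ K i}
    rw [hcard]
    have hpair : ∀ a b : Fin 4, {i : Fin 4 | e ∈ K i} ⊆ {a, b} →
        {i : Fin 4 | e ∈ K i}.ncard ≤ 2 := by
      intro a b hsub
      refine le_trans (Set.ncard_le_ncard hsub (Set.toFinite _)) ?_
      refine le_trans (Set.ncard_insert_le a {b}) ?_
      rw [Set.ncard_singleton]
    by_cases heJ : e ∈ J
    · apply hpair 0 (Fin.succ (c e))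
      intro i hi0
      have hi : e ∈ K i := hi0
      rcases h0123 i with rfl | rfl | rfl | rfl
      · exact Or.inl rfl
      · rw [hK1] at hi
        rcases hi with hi | hi
        · refine Or.inr ?_
          show (1 : Fin 4) = Fin.succ (c e)
          rw [hi.2]
          decide
        · exact absurd heJ ((subset_trans hP₀sub hHE hi).2).elim
      · rw [hK2] at hi
        rcases hi with hi | hi
        · refine Or.inr ?_
          show (2 : Fin 4) = Fin.succ (c e)
          rw [hi.2]
          decide
        · exact absurd heJ ((subset_trans hP₁sub hHE hi).2).elim
      · rw [hK3] at hi
        rcases hi with hi | hi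
        · refine Or.inr ?_
          show (3 : Fin 4) = Fin.succ (c e)
          rw [hi.2]
          decide
        · exact absurd heJ ((subset_trans hP₂sub hHE hi).2).elim
    · have hmem1 : ∀ i, e ∈ K i → (i = 1 ∧ e ∈ P₀) ∨ (i = 2 ∧ e ∈ P₁) ∨
          (i = 3 ∧ e ∈ symmDiff P₀ P₁) := by
        intro i hi
        rcases h0123 i with rfl | rfl | rfl | rfl
        · exact absurd hi heJ
        · rw [hK1] at hi
          rcases hi with hi | hi
          · exact absurd hi.1 heJ
          · exact Or.inl ⟨rfl, hi⟩
        · rw [hK2] at hi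
          rcases hi with hi | hi
          · exact absurd hi.1 heJ
          · exact Or.inr (Or.inl ⟨rfl, hi⟩)
        · rw [hK3] at hi
          rcases hi with hi | hi
          · exact absurd hi.1 heJ
          · exact Or.inr (Or.inr ⟨rfl, hi⟩)
      by_cases h0 : e ∈ P₀ <;> by_cases h1 : e ∈ P₁
      · apply hpair 1 2
        intro i hi
        rcases hmem1 i hi with ⟨rfl, -⟩ | ⟨rfl, -⟩ | ⟨rfl, hs⟩
        · exact Or.inl rfl
        · exact Or.inr rfl
        · rw [Set.mem_symmDiff] at hs
          tauto
      · apply hpair 1 3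
        intro i hi
        rcases hmem1 i hi with ⟨rfl, -⟩ | ⟨rfl, hs⟩ | ⟨rfl, -⟩
        · exact Or.inl rfl
        · exact absurd hs h1
        · exact Or.inr rfl
      · apply hpair 2 3
        intro i hi
        rcases hmem1 i hi with ⟨rfl, hs⟩ | ⟨rfl, -⟩ | ⟨rfl, -⟩
        · exact absurd hs h0
        · exact Or.inl rfl
        · exact Or.inr rfl
      · apply hpair 1 2
        intro i hi
        rcases hmem1 i hi with ⟨rfl, hs⟩ | ⟨rfl, hs⟩ | ⟨rfl, hs⟩
        · exact absurd hs h0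
        · exact absurd hs h1
        · rw [Set.mem_symmDiff] at hs
          tauto
  · rw [hK0]
    exact hconn
end

section
/- A cubic graph G has a 5-cycle double cover if and only if G has a (1,2)-cover of its edge set by 4 joins. -/
/-- A cycle of `G`: a set of edges of `G` at which every vertex has even degree. -/
def IsCycleOf {V : Type*} (G : SimpleGraph V) (C : Set (Sym2 V)) : Prop :=
  C ⊆ G.edgeSet ∧ ∀ v : V, Even (edgeDeg C v)

section Helpers

open Finset

open scoped Classical in
/-- Indicator of a proposition (with a fixed classical instance). -/
noncomputable def pind (P : Prop) : ℕ := if P then 1 else 0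

lemma pind_pos {P : Prop} (h : P) : pind P = 1 := by simp [pind, h]

lemma pind_neg {P : Prop} (h : ¬ P) : pind P = 0 := by simp [pind, h]

lemma pind_congr {P Q : Prop} (h : P ↔ Q) : pind P = pind Q := by
  by_cases hP : P
  · rw [pind_pos hP, pind_pos (h.mp hP)]
  · rw [pind_neg hP, pind_neg (fun hq => hP (h.mpr hq))]

lemma pind_cases (P : Prop) : pind P = 1 ∧ P ∨ pind P = 0 ∧ ¬ P := by
  by_cases h : P
  · exact Or.inl ⟨pind_pos h, h⟩
  · exact Or.inr ⟨pind_neg h, h⟩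

variable {V : Type*} [Fintype V] [DecidableEq V]

lemma natCard_eq_sum {n : ℕ} (p : Fin n → Prop) :
    Nat.card {i // p i} = ∑ i : Fin n, pind (p i) := by
  classical
  rw [Nat.card_eq_fintype_card, Fintype.card_subtype, Finset.card_filter]
  refine Finset.sum_congr rfl fun i _ => ?_
  by_cases h : p i
  · rw [pind_pos h, if_pos h]
  · rw [pind_neg h, if_neg h]

lemma sum_pind_add_sum_pind_not {α : Type*} (s : Finset α) (p : α → Prop) :
    ((∑ e ∈ s, pind (p e)) + ∑ e ∈ s, pind (¬ p e)) = s.card := by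
  rw [← Finset.sum_add_distrib, Finset.card_eq_sum_ones]
  refine Finset.sum_congr rfl fun e _ => ?_
  by_cases h : p e
  · rw [pind_pos h, pind_neg (not_not_intro h)]
  · rw [pind_neg h, pind_pos h]

lemma edgeDeg_eq_sum (G : SimpleGraph V) [DecidableRel G.Adj]
    (S : Set (Sym2 V)) (hS : S ⊆ G.edgeSet) (v : V) :
    edgeDeg S v = ∑ e ∈ G.incidenceFinset v, pind (e ∈ S) := by
  classical
  have h1 : edgeDeg S v = ((G.incidenceFinset v).filter (· ∈ S)).card := by
    rw [edgeDeg, ← Set.ncard_coe_finset]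
    congr 1
    ext e
    simp only [Finset.coe_filter, SimpleGraph.mem_incidenceFinset, SimpleGraph.incidenceSet,
      Set.mem_setOf_eq]
    exact ⟨fun ⟨h1, h2⟩ => ⟨⟨hS h1, h2⟩, h1⟩, fun ⟨⟨_, h2⟩, h1⟩ => ⟨h1, h2⟩⟩
  rw [h1, Finset.card_filter]
  refine Finset.sum_congr rfl fun e _ => ?_
  by_cases h : e ∈ S
  · rw [pind_pos h, if_pos h]
  · rw [pind_neg h, if_neg h]

lemma even_iff_cast (n : ℕ) : Even n ↔ (n : ZMod 2) = 0 := by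
  rw [ZMod.natCast_eq_zero_iff]
  constructor
  · rintro ⟨k, hk⟩; exact ⟨k, by omega⟩
  · rintro ⟨k, hk⟩; exact ⟨k, by omega⟩

/-- In a cubic graph, the degrees of `S` and its complement at a vertex sum to `3`. -/
lemma compl_deg (G : SimpleGraph V) [DecidableRel G.Adj]
    (hcubic : ∀ v : V, G.degree v = 3)
    (S : Set (Sym2 V)) (hS : S ⊆ G.edgeSet) (v : V) :
    edgeDeg S v + edgeDeg (G.edgeSet \ S) v = 3 := by
  have h1 : edgeDeg (G.edgeSet \ S) v
      = ∑ e ∈ G.incidenceFinset v, pind (¬ (e ∈ S)) := by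
    rw [edgeDeg_eq_sum G _ Set.diff_subset v]
    refine Finset.sum_congr rfl fun e he => ?_
    rw [SimpleGraph.mem_incidenceFinset] at he
    exact pind_congr (by simp [Set.mem_diff, he.1])
  rw [edgeDeg_eq_sum G S hS v, h1, sum_pind_add_sum_pind_not,
    SimpleGraph.card_incidenceFinset_eq_degree, hcubic]

/-- Parity of the degree of a symmetric difference. -/
lemma symmDiff_even (G : SimpleGraph V) [DecidableRel G.Adj]
    (A B : Set (Sym2 V)) (hA : A ⊆ G.edgeSet) (hB : B ⊆ G.edgeSet) (v : V)
    (heA : Even (edgeDeg A v)) (heB : Even (edgeDeg B v)) :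
    Even (edgeDeg (symmDiff A B) v) := by
  have hsub : symmDiff A B ⊆ G.edgeSet := by
    intro e he
    rcases Set.mem_symmDiff.mp he with ⟨h, -⟩ | ⟨h, -⟩
    · exact hA h
    · exact hB h
  rw [even_iff_cast, edgeDeg_eq_sum G _ hsub v]
  push_cast
  have key : ∀ e ∈ G.incidenceFinset v,
      ((pind (e ∈ symmDiff A B) : ℕ) : ZMod 2)
        = ((pind (e ∈ A) : ℕ) : ZMod 2) + ((pind (e ∈ B) : ℕ) : ZMod 2) := by
    intro e _
    rcases pind_cases (e ∈ A) with ⟨hA1, hA2⟩ | ⟨hA1, hA2⟩ <;>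
      rcases pind_cases (e ∈ B) with ⟨hB1, hB2⟩ | ⟨hB1, hB2⟩
    · rw [hA1, hB1, pind_neg (by simp [Set.mem_symmDiff, hA2, hB2])]; decide
    · rw [hA1, hB1, pind_pos (by simp [Set.mem_symmDiff, hA2, hB2])]; decide
    · rw [hA1, hB1, pind_pos (by simp [Set.mem_symmDiff, hA2, hB2])]; decide
    · rw [hA1, hB1, pind_neg (by simp [Set.mem_symmDiff, hA2, hB2])]; decide
  rw [Finset.sum_congr rfl key, Finset.sum_add_distrib]
  have cA : (∑ e ∈ G.incidenceFinset v, ((pind (e ∈ A) : ℕ) : ZMod 2))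
      = ((edgeDeg A v : ℕ) : ZMod 2) := by
    rw [edgeDeg_eq_sum G A hA v]; push_cast; rfl
  have cB : (∑ e ∈ G.incidenceFinset v, ((pind (e ∈ B) : ℕ) : ZMod 2))
      = ((edgeDeg B v : ℕ) : ZMod 2) := by
    rw [edgeDeg_eq_sum G B hB v]; push_cast; rfl
  rw [cA, cB, (even_iff_cast _).mp heA, (even_iff_cast _).mp heB, add_zero]

end Helpers

/-- **Hou–Lai–Zhang.** A cubic graph `G` has a 5-cycle double cover iff it has
a (1,2)-cover of its edge set by 4 joins. -/
theorem cdc5_iff_four_joins {V : Type*} [Fintype V] [DecidableEq V]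
    (G : SimpleGraph V) [DecidableRel G.Adj]
    (hcubic : ∀ v : V, G.degree v = 3) :
    (∃ C : Fin 5 → Set (Sym2 V), (∀ i, IsCycleOf G (C i)) ∧
      ∀ e ∈ G.edgeSet, Nat.card {i : Fin 5 // e ∈ C i} = 2) ↔
    (∃ J : Fin 4 → Set (Sym2 V), (∀ i, IsJoinOf G (J i)) ∧
      ∀ e ∈ G.edgeSet, 1 ≤ Nat.card {i : Fin 4 // e ∈ J i} ∧
        Nat.card {i : Fin 4 // e ∈ J i} ≤ 2) := by
  constructor
  · rintro ⟨C, hC, hcount⟩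
    refine ⟨fun i => G.edgeSet \ symmDiff (C i.castSucc) (C (Fin.last 4)),
      fun i => ?_, fun e he => ?_⟩
    · constructor
      · exact Set.diff_subset
      · intro v
        have hsub : symmDiff (C i.castSucc) (C (Fin.last 4)) ⊆ G.edgeSet := by
          intro e he
          rcases Set.mem_symmDiff.mp he with ⟨h, -⟩ | ⟨h, -⟩
          · exact (hC i.castSucc).1 h
          · exact (hC (Fin.last 4)).1 h
        have heven := symmDiff_even G _ _ ((hC i.castSucc).1) ((hC (Fin.last 4)).1) v
          ((hC i.castSucc).2 v) ((hC (Fin.last 4)).2 v)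
        have hsum := compl_deg G hcubic _ hsub v
        rcases heven with ⟨k, hk⟩
        beta_reduce
        omega
    · have hc5 : (∑ i : Fin 5, pind (e ∈ C i)) = 2 := by
        rw [← natCard_eq_sum]; exact hcount e he
      rw [Fin.sum_univ_castSucc] at hc5
      have hmemJ : ∀ i : Fin 4, e ∈ G.edgeSet \ symmDiff (C i.castSucc) (C (Fin.last 4))
          ↔ ((e ∈ C i.castSucc) ↔ (e ∈ C (Fin.last 4))) := by
        intro i
        simp only [Set.mem_diff, Set.mem_symmDiff, he, true_and]
        tauto
      rw [natCard_eq_sum]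
      beta_reduce
      by_cases hB : e ∈ C (Fin.last 4)
      · have h1 : (∑ i : Fin 4, pind (e ∈ G.edgeSet \ symmDiff (C i.castSucc) (C (Fin.last 4))))
            = ∑ i : Fin 4, pind (e ∈ C i.castSucc) :=
          Finset.sum_congr rfl fun i _ => pind_congr (by rw [hmemJ i]; tauto)
        rw [pind_pos hB] at hc5
        rw [h1]
        omega
      · have h1 : (∑ i : Fin 4, pind (e ∈ G.edgeSet \ symmDiff (C i.castSucc) (C (Fin.last 4))))
            = ∑ i : Fin 4, pind (¬ (e ∈ C i.castSucc)) :=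
          Finset.sum_congr rfl fun i _ => pind_congr (by rw [hmemJ i]; tauto)
        have h2 := sum_pind_add_sum_pind_not (Finset.univ : Finset (Fin 4))
          (fun i => e ∈ C (Fin.castSucc i))
        rw [pind_neg hB] at hc5
        simp only [Finset.card_univ, Fintype.card_fin] at h2
        rw [h1]
        omega
  · rintro ⟨J, hJ, hcov⟩
    have hJsub : ∀ i, J i ⊆ G.edgeSet := fun i => (hJ i).1
    have hcov' : ∀ e ∈ G.edgeSet, (∑ i : Fin 4, pind (e ∈ J i)) = 1 ∨
        (∑ i : Fin 4, pind (e ∈ J i)) = 2 := by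
      intro e he
      have h := hcov e he
      rw [natCard_eq_sum] at h
      omega
    set C5 : Set (Sym2 V) :=
      {e | e ∈ G.edgeSet ∧ (∑ i : Fin 4, pind (e ∈ J i)) = 1} with hC5def
    have hC5sub : C5 ⊆ G.edgeSet := fun e h => h.1
    have hC5even : ∀ v, Even (edgeDeg C5 v) := by
      intro v
      rw [even_iff_cast, edgeDeg_eq_sum G C5 hC5sub v]
      push_cast
      have key : ∀ e ∈ G.incidenceFinset v,
          ((pind (e ∈ C5) : ℕ) : ZMod 2)
            = ∑ i : Fin 4, ((pind (e ∈ J i) : ℕ) : ZMod 2) := by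
        intro e hei
        rw [SimpleGraph.mem_incidenceFinset] at hei
        have he : e ∈ G.edgeSet := hei.1
        have hsum : (∑ i : Fin 4, ((pind (e ∈ J i) : ℕ) : ZMod 2))
            = (((∑ i : Fin 4, pind (e ∈ J i) : ℕ)) : ZMod 2) := by
          push_cast; rfl
        rcases hcov' e he with h | h
        · rw [pind_pos (show e ∈ C5 from ⟨he, h⟩), hsum, h]; try decide
        · rw [pind_neg (show ¬ e ∈ C5 by rintro ⟨-, h1⟩; omega), hsum, h]; try decide
      rw [Finset.sum_congr rfl key, Finset.sum_comm]
      have hone : ∀ i : Fin 4,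
          (∑ e ∈ G.incidenceFinset v, ((pind (e ∈ J i) : ℕ) : ZMod 2)) = 1 := by
        intro i
        have hc : (∑ e ∈ G.incidenceFinset v, ((pind (e ∈ J i) : ℕ) : ZMod 2))
            = ((edgeDeg (J i) v : ℕ) : ZMod 2) := by
          rw [edgeDeg_eq_sum G (J i) (hJsub i) v]; push_cast; rfl
        rw [hc]
        rcases (hJ i).2 v with h | h <;> rw [h] <;> decide
      rw [Finset.sum_congr rfl (fun i _ => hone i)]
      simp only [Finset.sum_const, Finset.card_univ, Fintype.card_fin, smul_eq_mul]
      decide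
    refine ⟨fun i => Fin.lastCases C5 (fun j : Fin 4 => symmDiff (G.edgeSet \ J j) C5) i,
      fun i => ?_, fun e he => ?_⟩
    · induction i using Fin.lastCases with
      | last =>
        simp only [Fin.lastCases_last]
        exact ⟨hC5sub, hC5even⟩
      | cast j =>
        simp only [Fin.lastCases_castSucc]
        constructor
        · intro e he
          rcases Set.mem_symmDiff.mp he with ⟨h, -⟩ | ⟨h, -⟩
          · exact h.1
          · exact hC5sub h
        · intro v
          apply symmDiff_even G _ _ Set.diff_subset hC5sub v _ (hC5even v)
          have hsum := compl_deg G hcubic (J j) (hJsub j) v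
          rcases (hJ j).2 v with h | h
          · exact ⟨1, by omega⟩
          · exact ⟨0, by omega⟩
    · rw [natCard_eq_sum, Fin.sum_univ_castSucc]
      beta_reduce
      simp only [Fin.lastCases_castSucc, Fin.lastCases_last]
      rcases hcov' e he with h | h
      · have heC5 : e ∈ C5 := ⟨he, h⟩
        have h1 : (∑ i : Fin 4, pind (e ∈ symmDiff (G.edgeSet \ J i) C5))
            = ∑ i : Fin 4, pind (e ∈ J i) := by
          refine Finset.sum_congr rfl fun i _ => pind_congr ?_
          simp only [Set.mem_symmDiff, Set.mem_diff, he, true_and]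
          have := heC5
          tauto
        rw [h1, h, pind_pos heC5]
      · have heC5 : ¬ e ∈ C5 := by rintro ⟨-, h1⟩; omega
        have h1 : (∑ i : Fin 4, pind (e ∈ symmDiff (G.edgeSet \ J i) C5))
            = ∑ i : Fin 4, pind (¬ (e ∈ J i)) := by
          refine Finset.sum_congr rfl fun i _ => pind_congr ?_
          simp only [Set.mem_symmDiff, Set.mem_diff, he, true_and]
          have := heC5
          tauto
        have h2 := sum_pind_add_sum_pind_not (Finset.univ : Finset (Fin 4))
          (fun i => e ∈ J i)
        simp only [Finset.card_univ, Fintype.card_fin] at h2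
        rw [h1, pind_neg heC5]
        omega
end

section
/- Let G be a cubic graph that admits a connected join J such that the complement E(G) \ J is the edge set of a single circuit of G, and such that the subgraph induced by J admits a proper 3-edge-colouring. Then every proper 3-edge-colouring of J is congruent. -/
/-! Let `v₀` be a vertex of the circuit `C` and `Y` the set of vertices not reachable from `v₀`
in `G - S`. Vertices of `J`-degree 1 lie on `C`, and `C` avoids `S ⊆ J`, so by minimality of the
cut every edge of `S` joins the side of `v₀` to `Y`; thus `S` is exactly the set of edges leaving
`Y`, and the vertices of `Y` have `J`-degree 3. Every colour class therefore covers each vertex of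
`Y` exactly once, and counting its incidences with `Y` shows that it meets `S` in `|Y|` edges
mod 2. Summing over the three colours, so does `S`. -/

open Finset SimpleGraph

section Counting

variable {α V : Type*}

lemma Set.ncard_mod_two_eq_of_ncard_sep_mod_two {ι : Type*} [Fintype ι]
    (hι : Odd (Fintype.card ι)) {s : Set α} (hs : s.Finite) (c : α → ι) {n : ℕ}
    (h : ∀ j, {a ∈ s | c a = j}.ncard % 2 = n % 2) : s.ncard % 2 = n % 2 := by
  classical
  have hj : ∀ j, (#{a ∈ hs.toFinset | c a = j} : ZMod 2) = n := fun j =>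
    (ZMod.natCast_eq_natCast_iff' _ _ 2).2 (by rw [← Set.ncard_coe_finset]; simpa using h j)
  rw [← ZMod.natCast_eq_natCast_iff']
  calc (s.ncard : ZMod 2) = ∑ j, (#{a ∈ hs.toFinset | c a = j} : ZMod 2) := by
        rw [Set.ncard_eq_toFinset_card s hs,
          card_eq_sum_card_fiberwise fun a _ => Finset.mem_univ (c a), Nat.cast_sum]
    _ = n := by
        rw [sum_congr rfl fun j _ => hj j, sum_const, card_univ, nsmul_eq_mul,
          (ZMod.natCast_eq_one_iff_odd).2 hι, one_mul]

lemma Finset.card_filter_eq_one_of_injOn {β : Type*} [Fintype β] [DecidableEq β]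
    {s : Finset α} {f : α → β} (hs : #s = Fintype.card β) (hf : Set.InjOn f s) (b : β) :
    #{x ∈ s | f x = b} = 1 := by
  have himage : s.image f = univ := eq_univ_of_card _ (by rw [card_image_of_injOn hf, hs])
  obtain ⟨x, hx, rfl⟩ := mem_image.1 (himage ▸ mem_univ b)
  refine card_eq_one.2 ⟨x, ext fun y => ?_⟩
  simp only [mem_filter, mem_singleton]
  exact ⟨fun ⟨hy, hxy⟩ => hf hy hx hxy, by rintro rfl; exact ⟨hx, rfl⟩⟩

lemma card_filter_mem_sym2_le_two [DecidableEq V] (Y : Finset V) (e : Sym2 V) :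
    #{v ∈ Y | v ∈ e} ≤ 2 :=
  (card_le_card fun v hv => Sym2.mem_toFinset.2 (mem_filter.1 hv).2).trans
    (by rw [Sym2.card_toFinset]; split_ifs <;> omega)

lemma card_filter_mem_mk_eq_one_iff [DecidableEq V] {a b : V} (hab : a ≠ b) (Y : Finset V) :
    #{v ∈ Y | v ∈ s(a, b)} = 1 ↔ (a ∈ Y ↔ b ∉ Y) := by
  have : {v ∈ Y | v ∈ s(a, b)} = Y ∩ {a, b} := by ext; simp [and_comm]
  rw [this]
  by_cases ha : a ∈ Y <;> by_cases hb : b ∈ Y <;> simp [ha, hb, hab]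

/-- The parity lemma: if every vertex of `Y` lies on exactly one edge of `A`, then `|Y|` has the
parity of the number of edges of `A` with exactly one end in `Y`. -/
lemma card_mod_two_eq_card_filter_crossing [DecidableEq V] (A : Finset (Sym2 V)) (Y : Finset V)
    (hY : ∀ u ∈ Y, #{e ∈ A | u ∈ e} = 1) :
    #Y % 2 = #{e ∈ A | #{v ∈ Y | v ∈ e} = 1} % 2 := by
  have hdouble : #Y = ∑ e ∈ A, #{v ∈ Y | v ∈ e} := by
    calc #Y = ∑ u ∈ Y, #{e ∈ A | u ∈ e} := by
          rw [sum_congr rfl hY, sum_const, smul_eq_mul, mul_one]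
      _ = _ := sum_card_bipartiteAbove_eq_sum_card_bipartiteBelow (fun v e => v ∈ e)
  have hterm : ∀ e ∈ A,
      (#{v ∈ Y | v ∈ e} : ZMod 2) = if #{v ∈ Y | v ∈ e} = 1 then 1 else 0 := by
    intro e _
    have := card_filter_mem_sym2_le_two Y e
    interval_cases #{v ∈ Y | v ∈ e} <;> decide
  rw [← ZMod.natCast_eq_natCast_iff', hdouble, Nat.cast_sum, sum_congr rfl hterm, sum_boole]

end Counting

namespace SimpleGraph

variable {V : Type*} {G : SimpleGraph V} {S : Set (Sym2 V)}

lemma Reachable.of_deleteEdges_diff_singleton {u w a b : V}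
    (huw : (G.deleteEdges S).Reachable u w)
    (hab : (G.deleteEdges (S \ {s(u, w)})).Reachable a b) :
    (G.deleteEdges S).Reachable a b := by
  obtain ⟨p⟩ := hab
  induction p with
  | nil => rfl
  | @cons x y z hxy _ ih =>
    refine Reachable.trans ?_ ih
    rw [deleteEdges_adj, Set.mem_sdiff, Set.mem_singleton_iff, not_and_not_right] at hxy
    by_cases hS : s(x, y) ∈ S
    · rcases Sym2.eq_iff.1 (hxy.2 hS) with ⟨rfl, rfl⟩ | ⟨rfl, rfl⟩
      exacts [huw, huw.symm]
    · exact (deleteEdges_adj.2 ⟨hxy.1, hS⟩).reachable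

lemma card_connectedComponent_deleteEdges_le_diff_singleton [Finite V] {u w : V}
    (huw : (G.deleteEdges S).Reachable u w) :
    Nat.card (G.deleteEdges S).ConnectedComponent ≤
      Nat.card (G.deleteEdges (S \ {s(u, w)})).ConnectedComponent := by
  refine Nat.card_le_card_of_injective
    (ConnectedComponent.map (Hom.ofLE (deleteEdges_anti Set.sdiff_subset))) ?_
  refine ConnectedComponent.ind₂ fun a b hab => ?_
  rw [ConnectedComponent.map_mk, ConnectedComponent.map_mk, ConnectedComponent.eq] at hab
  exact ConnectedComponent.sound (huw.of_deleteEdges_diff_singleton hab)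

lemma Subgraph.Connected.reachable_deleteEdges {C : G.Subgraph} (hC : C.Connected)
    (hS : Disjoint C.edgeSet S) {u v : V} (hu : u ∈ C.verts) (hv : v ∈ C.verts) :
    (G.deleteEdges S).Reachable u v :=
  (hC.preconnected ⟨u, hu⟩ ⟨v, hv⟩).map
    { toFun := Subtype.val
      map_rel' := fun h => SimpleGraph.deleteEdges_adj.2
        ⟨C.adj_sub h, Set.disjoint_left.1 hS (C.mem_edgeSet.2 h)⟩ }

lemma edgeDeg_eq_degree_iff [Fintype V] [DecidableRel G.Adj] {J : Set (Sym2 V)}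
    (hJ : J ⊆ G.edgeSet) (v : V) : edgeDeg J v = G.degree v ↔ G.incidenceSet v ⊆ J := by
  classical
  have hsub : {e ∈ J | v ∈ e} ⊆ G.incidenceSet v := fun e he => ⟨hJ he.1, he.2⟩
  have hcard : (G.incidenceSet v).ncard = G.degree v := by
    rw [Set.ncard_eq_toFinset_card', ← card_incidenceSet_eq_degree, Set.toFinset_card]
  rw [edgeDeg, ← hcard]
  refine ⟨fun h e he => (Set.eq_of_subset_of_ncard_le hsub h.ge (Set.toFinite _) ▸ he).1,
    fun h => congrArg Set.ncard (hsub.antisymm fun e he => ⟨h he, he.2⟩)⟩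

lemma Subgraph.mem_verts_of_edgeDeg_ne_degree [Fintype V] [DecidableRel G.Adj]
    {J : Set (Sym2 V)} (hJ : J ⊆ G.edgeSet) {C : G.Subgraph} (hC : G.edgeSet \ J ⊆ C.edgeSet)
    {v : V} (hv : edgeDeg J v ≠ G.degree v) : v ∈ C.verts := by
  obtain ⟨e, hev, heJ⟩ := Set.not_subset.1 ((edgeDeg_eq_degree_iff hJ v).not.1 hv)
  exact C.mem_verts_of_mem_edge (hC ⟨hev.1, heJ⟩) hev.2

end SimpleGraph

lemma IsProperOn.card_filter_incidenceFinset_eq_one {V : Type*} [Fintype V] [DecidableEq V]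
    {G : SimpleGraph V} [DecidableRel G.Adj] {J : Set (Sym2 V)} {c : Sym2 V → Fin 3}
    (hc : IsProperOn J c) {u : V} (hdeg : G.degree u = 3) (hu : G.incidenceSet u ⊆ J)
    (j : Fin 3) : #{e ∈ G.incidenceFinset u | c e = j} = 1 := by
  refine card_filter_eq_one_of_injOn (by simp [hdeg]) (fun e₁ he₁ e₂ he₂ h => ?_) j
  rw [mem_coe, mem_incidenceFinset] at he₁ he₂
  by_contra hne
  exact hc e₁ (hu he₁) e₂ (hu he₂) hne ⟨u, he₁.2, he₂.2⟩ h

section EdgeCut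

variable {V : Type*} [Fintype V] {G : SimpleGraph V} {S : Set (Sym2 V)}

lemma IsEdgeCut.nonempty (hS : IsEdgeCut G S) : S.Nonempty := by
  rw [Set.nonempty_iff_ne_empty]
  rintro rfl
  simpa using hS.2.1

lemma IsEdgeCut.not_reachable (hS : IsEdgeCut G S) {u w : V} (he : s(u, w) ∈ S) :
    ¬ (G.deleteEdges S).Reachable u w := fun huw =>
  hS.2.2 _ (Set.sdiff_singleton_ssubset.2 he)
    (hS.2.1.trans_le (card_connectedComponent_deleteEdges_le_diff_singleton huw))

lemma IsEdgeCut.card_filter_mem_eq_one_iff [DecidableEq V] (hS : IsEdgeCut G S) {v₀ : V}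
    {Y : Finset V} (hY : ∀ v, v ∈ Y ↔ ¬ (G.deleteEdges S).Reachable v₀ v)
    (hSv₀ : ∀ e ∈ S, ∃ v ∈ e, (G.deleteEdges S).Reachable v₀ v)
    {e : Sym2 V} (he : e ∈ G.edgeSet) : #{v ∈ Y | v ∈ e} = 1 ↔ e ∈ S := by
  induction e using Sym2.ind with | h a b => ?_
  rw [card_filter_mem_mk_eq_one_iff (G.ne_of_adj he), hY, hY, not_not]
  by_cases heS : s(a, b) ∈ S
  · have hab := hS.not_reachable heS
    obtain ⟨v, hv, hv₀⟩ := hSv₀ _ heS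
    rcases Sym2.mem_iff.1 hv with rfl | rfl
    · exact iff_of_true ⟨fun h => absurd hv₀ h, fun h => absurd (hv₀.symm.trans h) hab⟩ heS
    · exact iff_of_true ⟨fun _ => hv₀, fun h ha => hab (ha.symm.trans h)⟩ heS
  · have hab : (G.deleteEdges S).Reachable a b := (deleteEdges_adj.2 ⟨he, heS⟩).reachable
    have : (G.deleteEdges S).Reachable v₀ a ↔ (G.deleteEdges S).Reachable v₀ b :=
      ⟨fun h => h.trans hab, fun h => h.trans hab.symm⟩
    exact iff_of_false (by tauto) heS

end EdgeCut

lemma ncard_sep_mod_two_eq_card_mod_two_of_coboundary {V : Type*} [Fintype V] [DecidableEq V]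
    {G : SimpleGraph V} [DecidableRel G.Adj] {S : Set (Sym2 V)} (hS : S ⊆ G.edgeSet)
    (c : Sym2 V → Fin 3) {Y : Finset V}
    (hY : ∀ u ∈ Y, ∀ j, #{e ∈ G.incidenceFinset u | c e = j} = 1)
    (hcross : ∀ e ∈ G.edgeSet, #{v ∈ Y | v ∈ e} = 1 ↔ e ∈ S) (j : Fin 3) :
    {e ∈ S | c e = j}.ncard % 2 = #Y % 2 := by
  have hclass : {e ∈ S | c e = j} =
      ↑{e ∈ {e ∈ G.edgeFinset | c e = j} | #{v ∈ Y | v ∈ e} = 1} := by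
    ext e
    simp only [Set.mem_ofPred_eq, coe_filter, mem_filter, mem_edgeFinset]
    exact ⟨fun ⟨heS, hcj⟩ => ⟨⟨hS heS, hcj⟩, (hcross e (hS heS)).2 heS⟩,
      fun ⟨⟨he, hcj⟩, h⟩ => ⟨(hcross e he).1 h, hcj⟩⟩
  rw [hclass, Set.ncard_coe_finset]
  refine (card_mod_two_eq_card_filter_crossing _ Y fun u hu => ?_).symm
  rw [filter_filter, ← hY u hu j, incidenceFinset_eq_filter, filter_filter]
  simp only [and_comm]

theorem colouring_congruent_of_complement_circuit_general {V : Type*} [Fintype V]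
    (G : SimpleGraph V) [DecidableRel G.Adj]
    (hcubic : ∀ v : V, G.degree v = 3)
    (J : Set (Sym2 V)) (hJ : IsJoinOf G J)
    (C : G.Subgraph) (hCconn : C.Connected)
    (hCcompl : C.edgeSet = G.edgeSet \ J) :
    ∀ c : Sym2 V → Fin 3, IsProperOn J c → IsCongruent G J c := by
  classical
  intro c hc S hSpend hS i
  have hverts : ∀ v, edgeDeg J v = 1 → v ∈ C.verts := fun v hv =>
    C.mem_verts_of_edgeDeg_ne_degree hJ.1 hCcompl.ge (by rw [hv, hcubic]; omega)
  obtain ⟨v₀, hv₀⟩ : ∃ v₀, v₀ ∈ C.verts :=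
    let ⟨e, he⟩ := hS.nonempty
    let ⟨v, _, hv⟩ := (hSpend e he).2
    ⟨v, hverts v hv⟩
  have hCS : Disjoint C.edgeSet S :=
    hCcompl ▸ Set.disjoint_sdiff_left.mono_right fun e he => (hSpend e he).1
  have hreach : ∀ v, edgeDeg J v = 1 → (G.deleteEdges S).Reachable v₀ v := fun v hv =>
    hCconn.reachable_deleteEdges hCS hv₀ (hverts v hv)
  set Y : Finset V := {v | ¬ (G.deleteEdges S).Reachable v₀ v} with hY
  have hYcolour : ∀ u ∈ Y, ∀ j, #{e ∈ G.incidenceFinset u | c e = j} = 1 := fun u hu =>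
    hc.card_filter_incidenceFinset_eq_one (hcubic u) <| by
      rw [← edgeDeg_eq_degree_iff hJ.1, hcubic]
      exact (hJ.2 u).resolve_left fun h => (mem_filter.1 hu).2 (hreach u h)
  have hcross : ∀ e ∈ G.edgeSet, #{v ∈ Y | v ∈ e} = 1 ↔ e ∈ S :=
    fun e => hS.card_filter_mem_eq_one_iff (by simp [hY]) fun e he =>
      let ⟨v, hve, hv⟩ := (hSpend e he).2
      ⟨v, hve, hreach v hv⟩
  have hparity := ncard_sep_mod_two_eq_card_mod_two_of_coboundary hS.1 c hYcolour hcross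
  exact (Set.ncard_mod_two_eq_of_ncard_sep_mod_two (by rw [Fintype.card_fin]; decide)
    S.toFinite c hparity).trans (hparity i).symm

/-- Let `G` be a cubic graph admitting a connected join `J` whose
complement `E(G) \ J` is the edge set of a single circuit of `G` (a connected 2-regular
subgraph), and suppose `J` admits a proper 3-edge-colouring. Then every proper
3-edge-colouring of `J` is congruent. -/
theorem colouring_congruent_of_complement_circuit {V : Type*} [Fintype V] [DecidableEq V]
    (G : SimpleGraph V) [DecidableRel G.Adj]
    (hcubic : ∀ v : V, G.degree v = 3)
    (J : Set (Sym2 V)) (hJ : IsJoinOf G J)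
    (hconn : (SimpleGraph.fromEdgeSet J).Connected)
    (C : G.Subgraph) (hCconn : C.Connected)
    (hCreg : ∀ v ∈ C.verts, (C.neighborSet v).ncard = 2)
    (hCcompl : C.edgeSet = G.edgeSet \ J)
    (hcolourable : ∃ c : Sym2 V → Fin 3, IsProperOn J c) :
    ∀ c : Sym2 V → Fin 3, IsProperOn J c → IsCongruent G J c :=
  colouring_congruent_of_complement_circuit_general G hcubic J hJ C hCconn hCcompl
end
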